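/- Let A be an n×n real symmetric matrix, let α be a set of P-vertices of A, and let β be a set of indices with α ⊆ β such that the rows of A indexed by β form a basis of the row space of A. If α is a P-set of the principal submatrix A[β], then α is a P-set of A. -/
import Mathlib
set_option maxHeartbeats 1000000
set_option synthInstance.maxHeartbeats 400000
set_option linter.unusedSectionVars false

open Matrix

/-- The nullity of a square real matrix. -/
noncomputable def Matrix.nullity {ι : Type*} [Fintype ι] (A : Matrix ι ι ℝ) : ℕ :=
  Fintype.card ι - A.rank

/-- `A.subOn s` is the principal submatrix of `A` on the rows and columns indexed
by `s`; thus `A.subOn sᶜ` is the matrix `A(s)` obtained by deleting the rows and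
columns indexed by `s`. -/
def Matrix.subOn {ι : Type*} (A : Matrix ι ι ℝ) (s : Finset ι) : Matrix s s ℝ :=
  A.submatrix Subtype.val Subtype.val

/-- `α` is a P-set of `A` if deleting the rows and columns indexed by `α`
increases the nullity by `|α|`. -/
def Matrix.IsPSet {ι : Type*} [Fintype ι] [DecidableEq ι] (A : Matrix ι ι ℝ)
    (α : Finset ι) : Prop :=
  (A.subOn αᶜ).nullity = A.nullity + α.card

namespace PSetAux

open Module LinearMap

variable {ι : Type*} [Fintype ι] [DecidableEq ι]

lemma nullity_eq_finrank_ker (A : Matrix ι ι ℝ) :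
    A.nullity = finrank ℝ (LinearMap.ker A.mulVecLin) := by
  have h := LinearMap.finrank_range_add_finrank_ker A.mulVecLin
  rw [Module.finrank_pi] at h
  have hr : A.rank = finrank ℝ (LinearMap.range A.mulVecLin) := rfl
  have hr2 : A.rank ≤ Fintype.card ι := by omega
  unfold Matrix.nullity
  omega

/-- extension by zero from coordinates in `s` to all coordinates -/
def extFun (s : Finset ι) : (s → ℝ) →ₗ[ℝ] (ι → ℝ) where
  toFun w i := if h : i ∈ s then w ⟨i, h⟩ else 0
  map_add' u v := by funext i; by_cases h : i ∈ s <;> simp [h]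
  map_smul' c v := by funext i; by_cases h : i ∈ s <;> simp [h]

lemma extFun_mem {s : Finset ι} (w : s → ℝ) {i : ι} (h : i ∈ s) :
    extFun s w i = w ⟨i, h⟩ := dif_pos h

lemma extFun_notMem {s : Finset ι} (w : s → ℝ) {i : ι} (h : i ∉ s) :
    extFun s w i = 0 := dif_neg h

lemma extFun_injective (s : Finset ι) : Function.Injective (extFun s) := by
  intro u v h
  funext k
  have := congrFun h k.1
  rwa [extFun_mem u k.2, extFun_mem v k.2] at this

lemma mulVec_extFun (A : Matrix ι ι ℝ) (s : Finset ι) (w : s → ℝ) (i : ι) :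
    (A *ᵥ extFun s w) i = ∑ k : s, A i k * w k := by
  have h1 : (A *ᵥ extFun s w) i = ∑ k : ι, A i k * extFun s w k := rfl
  rw [h1, ← Finset.sum_subset (Finset.subset_univ s)
    (fun x _ hx => by rw [extFun_notMem w hx, mul_zero]),
    ← Finset.sum_attach s (fun k => A i k * extFun s w k), Finset.univ_eq_attach]
  exact Finset.sum_congr rfl fun k _ => by rw [extFun_mem w k.2]

lemma subOn_mulVec (A : Matrix ι ι ℝ) (s : Finset ι) (w : s → ℝ) (k : s) :
    (A.subOn s *ᵥ w) k = ∑ l : s, A k l * w l := rfl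

variable (A : Matrix ι ι ℝ) (α : Finset ι)

/-- the map sending `w` in the kernel of `A(α)` to the `α`-coordinates of
`A *ᵥ (extension of w by zero)` -/
noncomputable def sigma :
    LinearMap.ker ((A.subOn αᶜ).mulVecLin) →ₗ[ℝ] (α → ℝ) :=
  (LinearMap.funLeft ℝ ℝ (Subtype.val : α → ι)) ∘ₗ A.mulVecLin ∘ₗ extFun αᶜ ∘ₗ
    (LinearMap.ker ((A.subOn αᶜ).mulVecLin)).subtype

lemma sigma_apply (w : LinearMap.ker ((A.subOn αᶜ).mulVecLin)) (j : α) :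
    sigma A α w j = (A *ᵥ extFun αᶜ w.1) ↑j := rfl

lemma mulVec_ext_compl (w : LinearMap.ker ((A.subOn αᶜ).mulVecLin)) {i : ι}
    (hi : i ∈ αᶜ) : (A *ᵥ extFun αᶜ w.1) i = 0 := by
  rw [mulVec_extFun, ← subOn_mulVec A αᶜ w.1 ⟨i, hi⟩]
  have hw : (A.subOn αᶜ).mulVecLin w.1 = 0 := LinearMap.mem_ker.mp w.2
  rw [Matrix.mulVecLin_apply] at hw
  rw [hw]
  rfl

lemma finrank_ker_sigma_le :
    finrank ℝ (LinearMap.ker (sigma A α)) ≤ finrank ℝ (LinearMap.ker A.mulVecLin) := by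
  set K := LinearMap.ker ((A.subOn αᶜ).mulVecLin)
  have hmem : ∀ w : LinearMap.ker (sigma A α),
      extFun αᶜ (w.1 : K).1 ∈ LinearMap.ker A.mulVecLin := by
    intro w
    rw [LinearMap.mem_ker, Matrix.mulVecLin_apply]
    funext i
    by_cases hi : i ∈ α
    · have hw0 : sigma A α w.1 = 0 := LinearMap.mem_ker.mp w.2
      exact congrFun hw0 ⟨i, hi⟩
    · exact mulVec_ext_compl A α w.1 (Finset.mem_compl.2 hi)
  let τ : LinearMap.ker (sigma A α) →ₗ[ℝ] LinearMap.ker A.mulVecLin :=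
    LinearMap.codRestrict _ (extFun αᶜ ∘ₗ K.subtype ∘ₗ (LinearMap.ker (sigma A α)).subtype) hmem
  have hinj : Function.Injective τ := by
    intro u v h
    have : extFun αᶜ (u.1 : K).1 = extFun αᶜ (v.1 : K).1 := congrArg Subtype.val h
    have := extFun_injective αᶜ this
    exact Subtype.ext (Subtype.ext this)
  calc finrank ℝ (LinearMap.ker (sigma A α))
      = finrank ℝ (LinearMap.range τ) := (LinearMap.finrank_range_of_inj hinj).symm
    _ ≤ finrank ℝ (LinearMap.ker A.mulVecLin) := Submodule.finrank_le _

lemma exists_of_isPSet (h : A.IsPSet α) :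
    ∀ j ∈ α, ∃ x : ι → ℝ, A *ᵥ x = Pi.single j 1 ∧ ∀ i ∈ α, x i = 0 := by
  have hrn := LinearMap.finrank_range_add_finrank_ker (sigma A α)
  have hker := finrank_ker_sigma_le A α
  have hcard : finrank ℝ (α → ℝ) = α.card := by
    rw [Module.finrank_pi, Fintype.card_coe]
  have hrange : finrank ℝ (LinearMap.range (sigma A α)) ≤ α.card := by
    rw [← hcard]; exact Submodule.finrank_le _
  have hnull : finrank ℝ (LinearMap.ker ((A.subOn αᶜ).mulVecLin))
      = finrank ℝ (LinearMap.ker A.mulVecLin) + α.card := by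
    have h1 := nullity_eq_finrank_ker (A.subOn αᶜ)
    have h2 := nullity_eq_finrank_ker A
    unfold Matrix.IsPSet at h
    omega
  have htop : LinearMap.range (sigma A α) = ⊤ := by
    apply Submodule.eq_top_of_finrank_eq
    rw [hcard]
    omega
  intro j hj
  obtain ⟨w, hw⟩ := LinearMap.range_eq_top.1 htop (Pi.single (⟨j, hj⟩ : α) 1)
  refine ⟨extFun αᶜ w.1, ?_, ?_⟩
  · funext i
    by_cases hi : i ∈ α
    · have := congrFun hw ⟨i, hi⟩
      rw [sigma_apply] at this
      rw [this, Pi.single_apply, Pi.single_apply]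
      simp [Subtype.ext_iff]
    · rw [mulVec_ext_compl A α w (Finset.mem_compl.2 hi), Pi.single_apply,
        if_neg (by rintro rfl; exact hi hj)]
  · intro i hi
    exact extFun_notMem _ (by simp [hi])

lemma sum_single_coe (β : Finset ι) (c : β → ℝ) {j : ι} (hj : j ∈ β) :
    ∑ l : β, c l * (Pi.single j (1 : ℝ) : ι → ℝ) ↑l = c ⟨j, hj⟩ := by
  rw [Fintype.sum_eq_single (⟨j, hj⟩ : β)]
  · simp
  · intro l hl
    rw [Pi.single_apply, if_neg, mul_zero]
    exact fun e => hl (Subtype.ext e)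

lemma isPSet_of_exists (hA : A.IsSymm) (X : ι → ι → ℝ)
    (hX1 : ∀ j ∈ α, A *ᵥ X j = Pi.single j 1)
    (hX2 : ∀ j ∈ α, ∀ i ∈ α, X j i = 0) : A.IsPSet α := by
  classical
  -- kernel vectors vanish on α
  have hkerα : ∀ v ∈ LinearMap.ker A.mulVecLin, ∀ j ∈ α, v j = 0 := by
    intro v hv j hj
    have hv' : A *ᵥ v = 0 := by
      rw [LinearMap.mem_ker, Matrix.mulVecLin_apply] at hv; exact hv
    have h1 : v ⬝ᵥ (A *ᵥ X j) = 0 := by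
      rw [Matrix.dotProduct_mulVec]
      have hsym : v ᵥ* A = A *ᵥ v := by
        calc v ᵥ* A = v ᵥ* Aᵀ := by rw [hA.eq]
          _ = A *ᵥ v := Matrix.vecMul_transpose A v
      rw [hsym, hv']
      simp
    rw [hX1 j hj] at h1
    simpa using h1
  -- the linear map realizing the lower bound
  set K := LinearMap.ker ((A.subOn αᶜ).mulVecLin) with hK
  let S : (α → ℝ) →ₗ[ℝ] (ι → ℝ) :=
    ∑ j : α, (LinearMap.proj j).smulRight (X ↑j)
  have hS : ∀ c : α → ℝ, S c = ∑ j : α, c j • X ↑j := by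
    intro c
    simp [S, LinearMap.sum_apply, LinearMap.smulRight_apply, LinearMap.proj_apply]
  have hSα : ∀ c : α → ℝ, ∀ i ∈ α, S c i = 0 := by
    intro c i hi
    rw [hS]
    rw [Finset.sum_apply]
    refine Finset.sum_eq_zero fun j _ => ?_
    simp [hX2 j.1 j.2 i hi]
  have hAS : ∀ c : α → ℝ, A *ᵥ S c = ∑ j : α, c j • (Pi.single (j : ι) (1:ℝ) : ι → ℝ) := by
    intro c
    rw [hS, ← Matrix.mulVecLin_apply, map_sum]
    refine Finset.sum_congr rfl fun j _ => ?_
    rw [LinearMap.map_smul, Matrix.mulVecLin_apply, hX1 j.1 j.2]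
  let ψ : (LinearMap.ker A.mulVecLin × (α → ℝ)) →ₗ[ℝ] (αᶜ : Finset ι) → ℝ :=
    (LinearMap.funLeft ℝ ℝ (Subtype.val : (αᶜ : Finset ι) → ι)) ∘ₗ
      ((LinearMap.ker A.mulVecLin).subtype.coprod S)
  have hψ_apply : ∀ p : LinearMap.ker A.mulVecLin × (α → ℝ), ∀ k : (αᶜ : Finset ι),
      ψ p k = (p.1.1 + S p.2) ↑k := fun p k => rfl
  have hvanish : ∀ p : LinearMap.ker A.mulVecLin × (α → ℝ), ∀ i ∈ α,
      (p.1.1 + S p.2) i = 0 := by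
    intro p i hi
    rw [Pi.add_apply, hkerα p.1.1 p.1.2 i hi, hSα p.2 i hi, add_zero]
  have hAp : ∀ p : LinearMap.ker A.mulVecLin × (α → ℝ),
      A *ᵥ (p.1.1 + S p.2) = ∑ j : α, p.2 j • (Pi.single (j : ι) (1:ℝ) : ι → ℝ) := by
    intro p
    rw [Matrix.mulVec_add, hAS]
    have : A *ᵥ p.1.1 = 0 := by
      have := p.1.2
      rwa [LinearMap.mem_ker, Matrix.mulVecLin_apply] at this
    rw [this, zero_add]
  have hsum_eval : ∀ (c : α → ℝ) (j₀ : α),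
      (∑ j : α, c j • (Pi.single (j : ι) (1:ℝ) : ι → ℝ)) ↑j₀ = c j₀ := by
    intro c j₀
    rw [Finset.sum_apply]
    have : ∀ j : α, (c j • (Pi.single (j : ι) (1:ℝ) : ι → ℝ)) ↑j₀ = c j * (Pi.single (j₀ : ι) (1:ℝ) : ι → ℝ) ↑j := by
      intro j
      rw [Pi.smul_apply, smul_eq_mul, Pi.single_apply, Pi.single_apply]
      congr 1
      simp [eq_comm]
    rw [Finset.sum_congr rfl fun j _ => this j]
    exact sum_single_coe α c j₀.2
  have hψinj : Function.Injective ψ := by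
    rw [← LinearMap.ker_eq_bot]
    rw [Submodule.eq_bot_iff]
    rintro ⟨v, c⟩ hp
    rw [LinearMap.mem_ker] at hp
    have hu : v.1 + S c = 0 := by
      funext i
      by_cases hi : i ∈ α
      · exact hvanish (v, c) i hi
      · have := congrFun hp ⟨i, Finset.mem_compl.2 hi⟩
        exact this
    have hc : c = 0 := by
      funext j₀
      have h0 : A *ᵥ (v.1 + S c) = 0 := by rw [hu, Matrix.mulVec_zero]
      rw [hAp (v, c)] at h0
      have := congrFun h0 ↑j₀
      rw [hsum_eval c j₀] at this
      exact this
    have hv : v = 0 := by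
      apply Subtype.ext
      have h := hu
      rw [hc, map_zero, add_zero] at h
      exact h
    rw [hv, hc]
    rfl
  have hψrange : LinearMap.range ψ ≤ K := by
    rintro w ⟨p, rfl⟩
    rw [LinearMap.mem_ker, Matrix.mulVecLin_apply]
    funext k
    have hext : extFun αᶜ (ψ p) = p.1.1 + S p.2 := by
      funext i
      by_cases hi : i ∈ α
      · rw [extFun_notMem _ (by simp [hi]), hvanish p i hi]
      · rw [extFun_mem _ (Finset.mem_compl.2 hi)]
        rfl
    show (A.subOn αᶜ *ᵥ ψ p) k = 0
    have h3 : (A.subOn αᶜ *ᵥ ψ p) k = (A *ᵥ extFun αᶜ (ψ p)) ↑k := by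
      rw [subOn_mulVec, mulVec_extFun]
    rw [h3, hext, hAp p]
    rw [Finset.sum_apply]
    refine Finset.sum_eq_zero fun j _ => ?_
    rw [Pi.smul_apply, smul_eq_mul, Pi.single_apply, if_neg, mul_zero]
    intro e
    have hk := k.2
    rw [Finset.mem_compl] at hk
    exact hk (e ▸ j.2)
  -- lower bound
  have hlow : finrank ℝ (LinearMap.ker A.mulVecLin) + α.card ≤ finrank ℝ K := by
    have h1 : finrank ℝ (LinearMap.ker A.mulVecLin × (α → ℝ))
        = finrank ℝ (LinearMap.ker A.mulVecLin) + α.card := by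
      rw [Module.finrank_prod, Module.finrank_pi, Fintype.card_coe]
    calc finrank ℝ (LinearMap.ker A.mulVecLin) + α.card
        = finrank ℝ (LinearMap.ker A.mulVecLin × (α → ℝ)) := h1.symm
      _ = finrank ℝ (LinearMap.range ψ) := (LinearMap.finrank_range_of_inj hψinj).symm
      _ ≤ finrank ℝ K := Submodule.finrank_mono hψrange
  -- upper bound
  have hup : finrank ℝ K ≤ finrank ℝ (LinearMap.ker A.mulVecLin) + α.card := by
    have hrn := LinearMap.finrank_range_add_finrank_ker (sigma A α)
    rw [hK]
    have hker := finrank_ker_sigma_le A α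
    have hrange : finrank ℝ (LinearMap.range (sigma A α)) ≤ α.card := by
      have : finrank ℝ (α → ℝ) = α.card := by rw [Module.finrank_pi, Fintype.card_coe]
      rw [← this]; exact Submodule.finrank_le _
    omega
  rw [hK] at hlow hup
  have h1 := nullity_eq_finrank_ker (A.subOn αᶜ)
  have h2 := nullity_eq_finrank_ker A
  unfold Matrix.IsPSet
  omega

end PSetAux

open PSetAux Module

/-- If `α` is a set of P-vertices of the symmetric matrix `A`, `α ⊆ β`, the rows
of `A` indexed by `β` form a basis of the row space of `A`, and `α` is a P-set of
the principal submatrix `A[β]`, then `α` is a P-set of `A`. -/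
theorem pset_of_submatrix_pset {n : ℕ} (A : Matrix (Fin n) (Fin n) ℝ) (hA : A.IsSymm)
    (α β : Finset (Fin n)) (hPvert : ∀ i ∈ α, A.IsPSet {i}) (hαβ : α ⊆ β)
    (hind : LinearIndependent ℝ (fun i : β => A i))
    (hspan : Submodule.span ℝ (A '' ↑β) = Submodule.span ℝ (Set.range A))
    (hPsub : (A.subOn β).IsPSet (α.subtype (· ∈ β))) :
    A.IsPSet α := by
  classical
  -- solutions over the submatrix
  have hY := exists_of_isPSet (A.subOn β) (α.subtype (· ∈ β)) hPsub
  choose Y hY1 hY2 using hY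
  -- solutions from the P-vertex hypothesis
  have hZ : ∀ j ∈ α, ∃ z, A *ᵥ z = Pi.single j 1 := by
    intro j hj
    obtain ⟨z, hz, -⟩ := exists_of_isPSet A {j} (hPvert j hj) j (Finset.mem_singleton_self j)
    exact ⟨z, hz⟩
  choose Z hZ using hZ
  set X : Fin n → Fin n → ℝ := fun j =>
    if h : j ∈ α then extFun β (Y ⟨j, hαβ h⟩ (Finset.mem_subtype.2 h)) else 0 with hXdef
  apply isPSet_of_exists A α hA X
  · intro j hj
    have hjβ : j ∈ β := hαβ hj
    have hXj : X j = extFun β (Y ⟨j, hjβ⟩ (Finset.mem_subtype.2 hj)) := by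
      rw [hXdef]; simp [hj]
    set Yj := Y ⟨j, hjβ⟩ (Finset.mem_subtype.2 hj) with hYjdef
    -- the equation holds at coordinates in β
    have hβcase : ∀ i (hi : i ∈ β), (A *ᵥ X j) i = (Pi.single j (1:ℝ) : Fin n → ℝ) i := by
      intro i hi
      rw [hXj, mulVec_extFun, ← subOn_mulVec A β Yj ⟨i, hi⟩,
        hY1 ⟨j, hjβ⟩ (Finset.mem_subtype.2 hj)]
      rw [Pi.single_apply, Pi.single_apply]
      simp [Subtype.ext_iff]
    funext i
    by_cases hi : i ∈ β
    · exact hβcase i hi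
    · -- coordinates outside β: use the spanning hypothesis and the P-vertex solution
      have hij : i ≠ j := fun e => hi (e ▸ hjβ)
      have himg : A '' ↑β = Set.range (fun l : β => A ↑l) := by
        ext x
        constructor
        · rintro ⟨l, hl, rfl⟩; exact ⟨⟨l, hl⟩, rfl⟩
        · rintro ⟨l, rfl⟩; exact ⟨↑l, l.2, rfl⟩
      have hmem : A i ∈ Submodule.span ℝ (Set.range (fun l : β => A ↑l)) := by
        rw [← himg, hspan]
        exact Submodule.subset_span (Set.mem_range_self i)
      obtain ⟨c, hc⟩ := (Submodule.mem_span_range_iff_exists_fun ℝ).1 hmem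
      have key : ∀ u : Fin n → ℝ, (A *ᵥ u) i = ∑ l : β, c l * (A *ᵥ u) ↑l := by
        intro u
        have h1 : (A *ᵥ u) i = A i ⬝ᵥ u := rfl
        rw [h1, ← hc]
        simp only [Matrix.mulVec, dotProduct, Finset.sum_apply, Pi.smul_apply, smul_eq_mul,
          Finset.sum_mul, Finset.mul_sum]
        rw [Finset.sum_comm]
        exact Finset.sum_congr rfl fun l _ => Finset.sum_congr rfl fun k _ => by ring
      have hcj : c ⟨j, hjβ⟩ = 0 := by
        have h1 := key (Z j hj)
        rw [hZ j hj] at h1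
        rw [Pi.single_apply, if_neg hij, sum_single_coe β c hjβ] at h1
        exact h1.symm
      rw [key (X j)]
      rw [Finset.sum_congr rfl fun l _ => by rw [hβcase ↑l l.2]]
      rw [sum_single_coe β c hjβ, hcj, Pi.single_apply, if_neg hij]
  · intro j hj i hi
    have hXj : X j = extFun β (Y ⟨j, hαβ hj⟩ (Finset.mem_subtype.2 hj)) := by
      rw [hXdef]; simp [hj]
    rw [hXj, extFun_mem _ (hαβ hi)]
    exact hY2 ⟨j, hαβ hj⟩ (Finset.mem_subtype.2 hj) ⟨i, hαβ hi⟩ (Finset.mem_subtype.2 hi)
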